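/- Let 𝒰 be a bounded, norm-closed multiplicative semigroup of invertible complex k×k matrices in which the only idempotent is the identity matrix. Then 𝒰 is a group. -/

import Mathlib

/-! A bounded closed set of matrices is compact. In a compact semigroup `S`, the closure `P̄` of
the positive powers of `u ∈ S` is a compact subsemigroup, so it contains an idempotent
(Ellis–Numakura), which must be `1`. As `P = {u} ∪ u P`, compactness gives `P̄ ⊆ {u} ∪ u P̄`;
hence `1 = u v` with `v ∈ P̄`, and `v` commutes with `u` because every element of `P̄` does. -/

open Matrix

/-- The operator norm of a complex matrix acting on `ℂ^k` with the standard
inner product. -/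
noncomputable def opNorm {k : ℕ} (T : Matrix (Fin k) (Fin k) ℂ) : ℝ :=
  ‖Matrix.toEuclideanCLM (𝕜 := ℂ) T‖

open Set

theorem pow_succ_mem_of_mul_mem {M : Type*} [Monoid M] {S : Set M}
    (hmul : ∀ a ∈ S, ∀ b ∈ S, a * b ∈ S) {u : M} (hu : u ∈ S) (n : ℕ) : u ^ (n + 1) ∈ S := by
  induction n with
  | zero => simpa using hu
  | succ n ih => exact pow_succ u (n + 1) ▸ hmul _ ih _ hu

section CompactSemigroup

variable {M : Type*} [Monoid M] [TopologicalSpace M] [ContinuousMul M] [T2Space M]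

theorem one_mem_closure_range_pow_succ {S : Set M} (hS : IsCompact S)
    (hmul : ∀ a ∈ S, ∀ b ∈ S, a * b ∈ S) (hidem : ∀ p ∈ S, p * p = p → p = 1)
    {u : M} (hu : u ∈ S) : (1 : M) ∈ closure (range fun n : ℕ ↦ u ^ (n + 1)) := by
  set P := range fun n : ℕ ↦ u ^ (n + 1)
  have hPS : closure P ⊆ S :=
    closure_minimal (range_subset_iff.2 (pow_succ_mem_of_mul_mem hmul hu)) hS.isClosed
  have hPmul : ∀ a ∈ P, ∀ b ∈ P, a * b ∈ P := by
    rintro - ⟨m, rfl⟩ - ⟨n, rfl⟩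
    exact ⟨m + n + 1, by rw [← pow_add]; ring_nf⟩
  obtain ⟨p, hp, hpp⟩ := exists_idempotent_in_compact_subsemigroup continuous_mul_const
    (closure P) ⟨u, subset_closure ⟨0, pow_one u⟩⟩ (hS.of_isClosed_subset isClosed_closure hPS)
    fun a ha b hb ↦ map_mem_closure₂ continuous_mul ha hb hPmul
  exact hidem p (hPS hp) hpp ▸ hp

theorem exists_inverse_mem_closure_range_pow_succ {u : M}
    (hc : IsCompact (closure (range fun n : ℕ ↦ u ^ (n + 1))))
    (h1 : (1 : M) ∈ closure (range fun n : ℕ ↦ u ^ (n + 1))) :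
    ∃ v ∈ closure (range fun n : ℕ ↦ u ^ (n + 1)), u * v = 1 ∧ v * u = 1 := by
  set P := range fun n : ℕ ↦ u ^ (n + 1)
  have hcomm : closure P ⊆ centralizer {u} :=
    closure_minimal (by rintro - ⟨n, rfl⟩ m rfl; exact (pow_mul_comm' m _).symm)
      (isClosed_centralizer _)
  have hshift : closure P ⊆ {u} ∪ (u * ·) '' closure P := by
    refine closure_minimal ?_
      (isClosed_singleton.union (hc.image (continuous_const_mul u)).isClosed)
    rintro - ⟨_ | n, rfl⟩
    · exact .inl (pow_one u)
    · exact .inr ⟨_, subset_closure ⟨n, rfl⟩, (pow_succ' u _).symm⟩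
  obtain rfl | ⟨v, hv, huv⟩ := hshift h1
  · exact ⟨1, h1, mul_one 1, mul_one 1⟩
  · exact ⟨v, hv, huv, hcomm hv u rfl ▸ huv⟩

theorem IsCompact.exists_inverse_of_idempotent_eq_one {S : Set M} (hS : IsCompact S)
    (hmul : ∀ a ∈ S, ∀ b ∈ S, a * b ∈ S) (hidem : ∀ p ∈ S, p * p = p → p = 1)
    {u : M} (hu : u ∈ S) : ∃ v ∈ S, u * v = 1 ∧ v * u = 1 := by
  have hPS : closure (range fun n : ℕ ↦ u ^ (n + 1)) ⊆ S :=
    closure_minimal (range_subset_iff.2 (pow_succ_mem_of_mul_mem hmul hu)) hS.isClosed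
  obtain ⟨v, hv, hinv⟩ := exists_inverse_mem_closure_range_pow_succ
    (hS.of_isClosed_subset isClosed_closure hPS) (one_mem_closure_range_pow_succ hS hmul hidem hu)
  exact ⟨v, hPS hv, hinv⟩

end CompactSemigroup

theorem isCompact_of_isClosed_of_opNorm_le {k : ℕ} {S : Set (Matrix (Fin k) (Fin k) ℂ)}
    (hclosed : IsClosed S) {C : ℝ} (hC : ∀ U ∈ S, opNorm U ≤ C) : IsCompact S := by
  let e :=
    (toEuclideanCLM (n := Fin k) (𝕜 := ℂ)).toAlgEquiv.toLinearEquiv.toContinuousLinearEquiv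
  have : IsCompact (e '' S) := by
    refine Metric.isCompact_of_isClosed_isBounded (e.toHomeomorph.isClosedMap _ hclosed) ?_
    exact (Metric.isBounded_iff_subset_closedBall 0).2
      ⟨C, by rintro - ⟨U, hU, rfl⟩; exact mem_closedBall_zero_iff.2 (hC U hU)⟩
  simpa using e.toHomeomorph.isCompact_image.1 this

theorem stmt12_general {k : ℕ} (𝒰 : Set (Matrix (Fin k) (Fin k) ℂ))
    (hne : 𝒰.Nonempty)
    (hmul : ∀ A ∈ 𝒰, ∀ B ∈ 𝒰, A * B ∈ 𝒰)
    (hclosed : IsClosed 𝒰)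
    (hbdd : ∃ C : ℝ, ∀ U ∈ 𝒰, opNorm U ≤ C)
    (hidem : ∀ P ∈ 𝒰, P * P = P → P = 1) :
    (1 : Matrix (Fin k) (Fin k) ℂ) ∈ 𝒰 ∧
      ∀ U ∈ 𝒰, ∃ V ∈ 𝒰, U * V = 1 ∧ V * U = 1 := by
  obtain ⟨C, hC⟩ := hbdd
  have hcompact : IsCompact 𝒰 := isCompact_of_isClosed_of_opNorm_le hclosed hC
  have hinverse := fun U (hU : U ∈ 𝒰) ↦ hcompact.exists_inverse_of_idempotent_eq_one hmul hidem hU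
  obtain ⟨U, hU⟩ := hne
  obtain ⟨V, hV, hUV, -⟩ := hinverse U hU
  exact ⟨hUV ▸ hmul U hU V hV, hinverse⟩

/-- A bounded, norm-closed, nonempty semigroup of invertible matrices whose only
idempotent is the identity is a group: it contains the identity and the inverse
of each of its elements. -/
theorem stmt12 {k : ℕ} (𝒰 : Set (Matrix (Fin k) (Fin k) ℂ))
    (hne : 𝒰.Nonempty)
    (hmul : ∀ A ∈ 𝒰, ∀ B ∈ 𝒰, A * B ∈ 𝒰)
    (hclosed : IsClosed 𝒰)
    (hbdd : ∃ C : ℝ, ∀ U ∈ 𝒰, opNorm U ≤ C)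
    (hinv : ∀ U ∈ 𝒰, IsUnit U)
    (hidem : ∀ P ∈ 𝒰, P * P = P → P = 1) :
    (1 : Matrix (Fin k) (Fin k) ℂ) ∈ 𝒰 ∧
      ∀ U ∈ 𝒰, ∃ V ∈ 𝒰, U * V = 1 ∧ V * U = 1 :=
  stmt12_general 𝒰 hne hmul hclosed hbdd hidem
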